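/- Let F(n,k) = 512 · (-1)^k / (2^{16n} 2^{4k}) · n³/(4n-2k-1) · binom(2n,n)⁴ binom(2k,k)³ binom(4n-2k,2n-k) / (binom(2n,k) binom(n+k,n)²) and G(n,k) = ((4n-2k-1)(84kn + 10k + 120n² + 34n + 3)/(512 n³)) · F(n,k). Then for all integers n ≥ 1 and 0 ≤ k < 2n, F(n+1,k) − F(n,k) = G(n,k+1) − G(n,k). -/

import Mathlib

noncomputable def F17 (n k : ℕ) : ℝ :=
  512 * (-1 : ℝ)^k / (2^(16*n) * 2^(4*k)) * (n : ℝ)^3 / (4*(n : ℝ) - 2*(k : ℝ) - 1)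
    * ((Nat.choose (2*n) n : ℝ)^4 * (Nat.choose (2*k) k : ℝ)^3
        * (Nat.choose (4*n - 2*k) (2*n - k) : ℝ))
    / ((Nat.choose (2*n) k : ℝ) * (Nat.choose (n+k) n : ℝ)^2)

noncomputable def G17 (n k : ℕ) : ℝ :=
  (4*(n : ℝ) - 2*(k : ℝ) - 1) * (84*(k : ℝ)*(n : ℝ) + 10*(k : ℝ) + 120*(n : ℝ)^2 + 34*(n : ℝ) + 3)
    / (512 * (n : ℝ)^3) * F17 n k

lemma central_step (m : ℕ) :
    ((2*m+2).choose (m+1) : ℝ) = 2*(2*(m:ℝ)+1) * ((2*m).choose m : ℝ) / ((m:ℝ)+1) := by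
  have h := Nat.succ_mul_centralBinom_succ m
  simp only [Nat.centralBinom] at h
  have h2 : (2*(m+1)) = 2*m+2 := by ring
  rw [h2] at h
  have := congrArg (Nat.cast (R := ℝ)) h
  push_cast at this
  field_simp
  linarith [this]

set_option maxHeartbeats 3200000

theorem guillera_wz_pair (n k : ℕ) (hn : 1 ≤ n) (hk : k < 2*n) :
    F17 (n+1) k - F17 n k = G17 n (k+1) - G17 n k := by
  obtain ⟨j, hj⟩ : ∃ j, 2*n - k = j + 1 := ⟨2*n - k - 1, by omega⟩
  have hkj : k + (j + 1) = 2*n := by omega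
  have hk' : (k:ℝ) = 2*(n:ℝ) - (j:ℝ) - 1 := by
    have := congrArg (Nat.cast (R := ℝ)) hkj; push_cast at this; linarith
  -- index normalizations
  have i1 : 2*(n+1) = 2*n+2 := by ring
  have i2 : 4*(n+1) - 2*k = 2*j+6 := by omega
  have i3 : 2*(n+1) - k = j+3 := by omega
  have i3' : 2*n+2 - k = j+3 := by omega
  have i4 : 4*n - 2*k = 2*j+2 := by omega
  have i5 : 2*n - k = j+1 := hj
  have i6 : 4*n - 2*(k+1) = 2*j := by omega
  have i6' : 4*n - (2*k+2) = 2*j := by omega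
  have i7 : 2*n - (k+1) = j := by omega
  have i8 : n+1+k = (n+k)+1 := by ring
  have i9 : n+(k+1) = (n+k)+1 := by ring
  have i10 : 2*(k+1) = 2*k+2 := by ring
  -- nonzero facts
  have hn0 : (n:ℝ) ≠ 0 := by positivity
  have hn1 : (n:ℝ)+1 ≠ 0 := by positivity
  have hk1 : (k:ℝ)+1 ≠ 0 := by positivity
  have hj0 : (j:ℝ)+1 ≠ 0 := by positivity
  have hj2 : (j:ℝ)+2 ≠ 0 := by positivity
  have hj3 : (j:ℝ)+3 ≠ 0 := by positivity
  have hj1 : 2*(j:ℝ)+1 ≠ 0 := by positivity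
  have hjm : 2*(j:ℝ)-1 ≠ 0 := by
    rcases j with _ | j
    · norm_num
    · push_cast; intro h; nlinarith [Nat.cast_nonneg (α := ℝ) j]
  have h2n1 : 2*(n:ℝ)+1 ≠ 0 := by positivity
  have h2n2 : 2*(n:ℝ)+2 ≠ 0 := by positivity
  have hd1 : 4*((n:ℝ)+1) - 2*(2*(n:ℝ)-(j:ℝ)-1) - 1 ≠ 0 := by
    have e : 4*((n:ℝ)+1) - 2*(2*(n:ℝ)-(j:ℝ)-1) - 1 = 2*(j:ℝ)+5 := by ring
    rw [e]; positivity
  have hd2 : 4*(n:ℝ) - 2*(2*(n:ℝ)-(j:ℝ)-1) - 1 ≠ 0 := by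
    have e : 4*(n:ℝ) - 2*(2*(n:ℝ)-(j:ℝ)-1) - 1 = 2*(j:ℝ)+1 := by ring
    rw [e]; positivity
  have hd3 : 4*(n:ℝ) - 2*(2*(n:ℝ)-(j:ℝ)-1+1) - 1 ≠ 0 := by
    have e : 4*(n:ℝ) - 2*(2*(n:ℝ)-(j:ℝ)-1+1) - 1 = 2*(j:ℝ)-1 := by ring
    rw [e]; exact hjm
  have hd3' : 4*(n:ℝ) - 2*(2*(n:ℝ)-(j:ℝ)) - 1 ≠ 0 := by
    have e : 4*(n:ℝ) - 2*(2*(n:ℝ)-(j:ℝ)) - 1 = 2*(j:ℝ)-1 := by ring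
    rw [e]; exact hjm
  have hd4 : (n:ℝ) + (2*(n:ℝ)-(j:ℝ)-1) + 1 ≠ 0 := by
    have e : (n:ℝ) + (2*(n:ℝ)-(j:ℝ)-1) + 1 = (n:ℝ)+(k:ℝ)+1 := by rw [hk']
    rw [e]; positivity
  have hd5 : 2*(n:ℝ)-(j:ℝ)-1+1 ≠ 0 := by
    have e : 2*(n:ℝ)-(j:ℝ)-1+1 = (k:ℝ)+1 := by rw [hk']
    rw [e]; positivity
  have hd6 : 3*(n:ℝ)-(j:ℝ) ≠ 0 := by
    have e : 3*(n:ℝ)-(j:ℝ) = (n:ℝ)+(k:ℝ)+1 := by rw [hk']; ring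
    rw [e]; positivity
  have hd7 : 2*(n:ℝ)-(j:ℝ) ≠ 0 := by
    have e : 2*(n:ℝ)-(j:ℝ) = (k:ℝ)+1 := by rw [hk']; ring
    rw [e]; positivity
  have hd8 : 2*(2*(n:ℝ)-(j:ℝ)-1)+1 ≠ 0 := by
    have e : 2*(2*(n:ℝ)-(j:ℝ)-1)+1 = 2*(k:ℝ)+1 := by rw [hk']
    rw [e]; positivity
  have e1 : (n:ℝ)*3 - (j:ℝ) ≠ 0 := by intro h; apply hd6; linarith
  have e2 : (n:ℝ)*2 - (j:ℝ) ≠ 0 := by intro h; apply hd7; linarith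
  have e3 : ((n:ℝ)+1)*4 - 2*(2*(n:ℝ)-(j:ℝ)-1) - 1 ≠ 0 := by intro h; apply hd1; linarith
  have e4 : (n:ℝ)*4 - 2*(2*(n:ℝ)-(j:ℝ)-1) - 1 ≠ 0 := by intro h; apply hd2; linarith
  have e5 : (n:ℝ)*4 - 2*((n:ℝ)*2-(j:ℝ)-1) - 1 ≠ 0 := by intro h; apply hd2; linarith
  have e6 : (n:ℝ)*4 - 2*((n:ℝ)*2-(j:ℝ)-1+1) - 1 ≠ 0 := by intro h; apply hd3; linarith
  have e7 : (n:ℝ)*2 - (j:ℝ) - 1 + 1 ≠ 0 := by intro h; apply hd5; linarith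
  have e8 : (n:ℝ) + ((n:ℝ)*2 - (j:ℝ) - 1) + 1 ≠ 0 := by intro h; apply hd4; linarith
  have e9 : 2*((n:ℝ)*2 - (j:ℝ) - 1) + 1 ≠ 0 := by intro h; apply hd8; linarith
  have e10 : (n:ℝ)*4 - 2*(j:ℝ) - 1 ≠ 0 := by intro h; apply hd8; linarith
  have h2a : (2:ℝ)^(16*n) ≠ 0 := by positivity
  have h2b : (2:ℝ)^(4*k) ≠ 0 := by positivity
  have hD : ((2*n).choose k : ℝ) ≠ 0 := by
    exact_mod_cast (Nat.choose_pos (by omega)).ne'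
  have hE : ((n+k).choose n : ℝ) ≠ 0 := by
    exact_mod_cast (Nat.choose_pos (by omega)).ne'
  -- choose recurrences in divided real form
  have hc1 : ((2*n+2).choose (n+1) : ℝ)
      = 2*(2*(n:ℝ)+1) * ((2*n).choose n : ℝ) / ((n:ℝ)+1) := central_step n
  have hc2 : ((2*k+2).choose (k+1) : ℝ)
      = 2*(2*(k:ℝ)+1) * ((2*k).choose k : ℝ) / ((k:ℝ)+1) := central_step k
  have hc3mid : ((2*j+4).choose (j+2) : ℝ)
      = 2*(2*(j:ℝ)+3) * ((2*j+2).choose (j+1) : ℝ) / ((j:ℝ)+2) := by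
    have h := central_step (j+1)
    rw [show 2*(j+1)+2 = 2*j+4 from by ring, show j+1+1 = j+2 from by ring,
      show 2*(j+1) = 2*j+2 from by ring] at h
    rw [h]; push_cast
    rw [div_eq_div_iff (by positivity) (by positivity)]; ring
  have hc3up : ((2*j+6).choose (j+3) : ℝ)
      = 2*(2*(j:ℝ)+5) * (2*(2*(j:ℝ)+3)) * ((2*j+2).choose (j+1) : ℝ)
        / (((j:ℝ)+3) * ((j:ℝ)+2)) := by
    have h := central_step (j+2)
    rw [show 2*(j+2)+2 = 2*j+6 from by ring, show j+2+1 = j+3 from by ring,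
      show 2*(j+2) = 2*j+4 from by ring] at h
    rw [h, hc3mid]; push_cast
    field_simp; ring
  have hc3down : ((2*j).choose j : ℝ)
      = ((j:ℝ)+1) * ((2*j+2).choose (j+1) : ℝ) / (2*(2*(j:ℝ)+1)) := by
    rw [central_step j]; field_simp
  have hc4up : ((2*n+2).choose k : ℝ)
      = (2*(n:ℝ)+1)*(2*(n:ℝ)+2) * ((2*n).choose k : ℝ) / (((j:ℝ)+2)*((j:ℝ)+3)) := by
    have h1 := Nat.choose_mul_succ_eq (2*n) k
    have h2 := Nat.choose_mul_succ_eq (2*n+1) k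
    rw [show 2*n+1-k = j+2 from by omega] at h1
    rw [show 2*n+1+1 = 2*n+2 from rfl, show 2*n+1+1-k = j+3 from by omega] at h2
    have c1 := congrArg (Nat.cast (R := ℝ)) h1
    have c2 := congrArg (Nat.cast (R := ℝ)) h2
    push_cast at c1 c2
    rw [eq_div_iff (by positivity)]
    linear_combination (-(2*(n:ℝ)+2))*c1 - ((j:ℝ)+2)*c2
  have hc4right : ((2*n).choose (k+1) : ℝ)
      = ((j:ℝ)+1) * ((2*n).choose k : ℝ) / ((k:ℝ)+1) := by
    have h := Nat.choose_succ_right_eq (2*n) k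
    rw [i5] at h
    have c := congrArg (Nat.cast (R := ℝ)) h
    push_cast at c
    rw [eq_div_iff hk1]
    linear_combination c
  have hc5up : (((n+k)+1).choose (n+1) : ℝ)
      = ((n:ℝ)+(k:ℝ)+1) * ((n+k).choose n : ℝ) / ((n:ℝ)+1) := by
    have h := Nat.add_one_mul_choose_eq (n+k) n
    have c := congrArg (Nat.cast (R := ℝ)) h
    push_cast at c
    rw [eq_div_iff hn1]
    linear_combination -c
  have hc5right : (((n+k)+1).choose n : ℝ)
      = ((n:ℝ)+(k:ℝ)+1) * ((n+k).choose n : ℝ) / ((k:ℝ)+1) := by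
    have h := Nat.choose_mul_succ_eq (n+k) n
    rw [show n+k+1-n = k+1 from by omega] at h
    have c := congrArg (Nat.cast (R := ℝ)) h
    push_cast at c
    rw [eq_div_iff hk1]
    linear_combination -c
  -- ratio lemmas
  have L1 : F17 (n+1) k
      = ((1/65536) * (((n:ℝ)+1)/(n:ℝ))^3 * ((2*(j:ℝ)+1)/(2*(j:ℝ)+5))
          * (2*(2*(n:ℝ)+1)/((n:ℝ)+1))^4
          * (2*(2*(j:ℝ)+3)/((j:ℝ)+2)) * (2*(2*(j:ℝ)+5)/((j:ℝ)+3))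
          * (((j:ℝ)+3)*((j:ℝ)+2)/((2*(n:ℝ)+1)*(2*(n:ℝ)+2)))
          * (((n:ℝ)+1)/(3*(n:ℝ)-(j:ℝ)))^2) * F17 n k := by
    simp only [F17, i1, i2, i3, i3', i4, i5, i8, hc1, hc3up, hc4up, hc5up]
    push_cast
    rw [show 16*(n+1) = 16*n+16 from by ring, pow_add, hk']
    field_simp
    ring
  have L2 : F17 n (k+1)
      = (-(1/16) * ((2*(j:ℝ)+1)/(2*(j:ℝ)-1))
          * (2*(4*(n:ℝ)-2*(j:ℝ)-1)/(2*(n:ℝ)-(j:ℝ)))^3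
          * (((j:ℝ)+1)/(2*(2*(j:ℝ)+1)))
          * ((2*(n:ℝ)-(j:ℝ))/((j:ℝ)+1))
          * ((2*(n:ℝ)-(j:ℝ))/(3*(n:ℝ)-(j:ℝ)))^2) * F17 n k := by
    simp only [F17, i4, i5, i6, i6', i7, i9, i10, hc2, hc3down, hc4right, hc5right]
    push_cast
    rw [show 4*(k+1) = 4*k+4 from by ring]
    rw [show (2:ℝ)^(4*k+4) = 2^(4*k) * 16 from by rw [pow_add]; norm_num]
    rw [show ((-1:ℝ))^(k+1) = (-1)^k * (-1) from by rw [pow_succ]]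
    rw [hk']
    field_simp
    ring
  rw [L1]
  simp only [G17]
  rw [L2]
  push_cast
  rw [hk']
  field_simp
  ring
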